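/- arXiv:2406.03717 — 5 statements merged into one kernel-verified Lean document; each statement's English description precedes it below -/
import Mathlib

section
/- Let p₁, p₂ be points in the hyperbolic plane ℍ² with d = dist(p₁,p₂) > 0, and let r₁, r₂ ∈ (0, d). Then there exists a unique point p₀ on the geodesic segment between p₁ and p₂ such that cosh(dist(p₀,p₁))/cosh(r₁) = cosh(dist(p₀,p₂))/cosh(r₂). -/
/-! The hyperbolic circles of radii `t` and `s` about `p₁` and `p₂`, where `t + s = dist p₁ p₂`,
are Euclidean circles whose centres lie at Euclidean distance exactly the sum of their radii (this
is `cosh (t + s) = cosh t * cosh s + sinh t * sinh s` in disguise). So they touch in exactly one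
point, and the points of the geodesic segment are parametrized by their distance `t` to `p₁`.
Along this parametrization the difference of the two ratios is strictly increasing in `t` and
changes sign, hence vanishes exactly once. -/

open Real UpperHalfPlane Set

theorem existsUnique_cosh_div_eq_cosh_sub_div {d r₁ r₂ : ℝ} (h₁ : |r₁| ≤ d) (h₂ : |r₂| ≤ d) :
    ∃! t, t ∈ Icc 0 d ∧ cosh t / cosh r₁ = cosh (d - t) / cosh r₂ := by
  set F : ℝ → ℝ := fun s ↦ cosh s / cosh r₁ - cosh (d - s) / cosh r₂
  have hd : 0 ≤ d := (abs_nonneg r₁).trans h₁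
  have hF_mono : StrictMonoOn F (Icc 0 d) := by
    intro s hs u hu hsu
    have hcosh : cosh s < cosh u := cosh_strictMonoOn hs.1 hu.1 hsu
    have hcosh_sub : cosh (d - u) ≤ cosh (d - s) :=
      cosh_le_cosh.2 (by rw [abs_of_nonneg (sub_nonneg.2 hu.2),
        abs_of_nonneg (sub_nonneg.2 hs.2)]; linarith)
    have := div_lt_div_of_pos_right hcosh (cosh_pos r₁)
    have := div_le_div_of_nonneg_right hcosh_sub (cosh_pos r₂).le
    simp only [F]
    linarith
  have one_le_cosh_div {r : ℝ} (hr : |r| ≤ d) : 1 ≤ cosh d / cosh r :=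
    (one_le_div (cosh_pos r)).2 (cosh_le_cosh.2 (hr.trans (le_abs_self d)))
  have one_div_cosh_le (r : ℝ) : 1 / cosh r ≤ 1 := div_le_one_of_le₀ (one_le_cosh r) (cosh_pos r).le
  have hF₀ : F 0 ≤ 0 := by
    simp only [F, cosh_zero, sub_zero]
    linarith [one_le_cosh_div h₂, one_div_cosh_le r₁]
  have hF_d : 0 ≤ F d := by
    simp only [F, cosh_zero, sub_self]
    linarith [one_le_cosh_div h₁, one_div_cosh_le r₂]
  have hF_cont : ContinuousOn F (Icc 0 d) := by fun_prop
  obtain ⟨t, ht, hFt⟩ := intermediate_value_Icc hd hF_cont ⟨hF₀, hF_d⟩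
  refine ⟨t, ⟨ht, sub_eq_zero.1 hFt⟩, fun s ⟨hs, hFs⟩ ↦ hF_mono.injOn hs ht ?_⟩
  simp only [F, hFs, sub_self, hFt]

theorem existsUnique_dist_eq_and_dist_eq_of_dist_eq_add {E : Type*} [NormedAddCommGroup E]
    [NormedSpace ℝ E] [StrictConvexSpace ℝ E] {c₁ c₂ : E} {R₁ R₂ : ℝ} (h₁ : 0 ≤ R₁) (h₂ : 0 ≤ R₂)
    (h : dist c₁ c₂ = R₁ + R₂) : ∃! x, dist x c₁ = R₁ ∧ dist x c₂ = R₂ := by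
  set θ := R₁ / (R₁ + R₂)
  have hθ₁ : θ * dist c₁ c₂ = R₁ := by
    rw [h]; exact div_mul_cancel_of_imp fun h0 ↦ by linarith
  have hθ₂ : (1 - θ) * dist c₁ c₂ = R₂ := by rw [sub_mul, one_mul, hθ₁, h]; ring
  have hθ : θ ∈ Icc 0 1 := ⟨by positivity, div_le_one_of_le₀ (by linarith) (by linarith)⟩
  refine ⟨AffineMap.lineMap c₁ c₂ θ, ⟨?_, ?_⟩, fun x ⟨hx₁, hx₂⟩ ↦ ?_⟩
  · rw [dist_lineMap_left, Real.norm_of_nonneg hθ.1, hθ₁]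
  · rw [dist_lineMap_right, Real.norm_of_nonneg (sub_nonneg.2 hθ.2), hθ₂]
  · exact eq_lineMap_of_dist_eq_mul_of_dist_eq_mul (by rw [dist_comm, hx₁, hθ₁])
      (by rw [hx₂, hθ₂])

namespace UpperHalfPlane

theorem dist_coe_center_center {p₁ p₂ : ℍ} {t s : ℝ} (ht : 0 ≤ t) (hs : 0 ≤ s)
    (h : t + s = dist p₁ p₂) :
    dist (p₁.center t : ℂ) (p₂.center s) = p₁.im * sinh t + p₂.im * sinh s := by
  have hcosh : cosh t * cosh s + sinh t * sinh s = cosh (dist p₁ p₂) := by rw [← h, cosh_add]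
  rw [cosh_dist', eq_div_iff (by positivity)] at hcosh
  rw [← sqrt_sq (by positivity : 0 ≤ p₁.im * sinh t + p₂.im * sinh s), Complex.dist_eq,
    ← sqrt_sq (norm_nonneg _), Complex.sq_norm, Complex.normSq_apply]
  congr 1
  simp only [Complex.sub_re, Complex.sub_im, coe_re, coe_im, center_re, center_im]
  linear_combination (-1 : ℝ) * hcosh + p₁.im ^ 2 * cosh_sq_sub_sinh_sq t +
    p₂.im ^ 2 * cosh_sq_sub_sinh_sq s

theorem existsUnique_dist_eq_and_dist_eq {p₁ p₂ : ℍ} {t s : ℝ} (ht : 0 ≤ t) (hs : 0 ≤ s)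
    (h : t + s = dist p₁ p₂) : ∃! p : ℍ, dist p₁ p = t ∧ dist p p₂ = s := by
  obtain ⟨x, ⟨hx₁, hx₂⟩, hx_unique⟩ := existsUnique_dist_eq_and_dist_eq_of_dist_eq_add
    (mul_nonneg p₁.im_pos.le (sinh_nonneg_iff.2 ht))
    (mul_nonneg p₂.im_pos.le (sinh_nonneg_iff.2 hs))
    (dist_coe_center_center ht hs h)
  lift x to ℍ using im_pos_of_dist_center_le hx₁.le
  refine ⟨x, ⟨?_, dist_eq_iff_dist_coe_center_eq.2 hx₂⟩, fun p ⟨hp₁, hp₂⟩ ↦ ?_⟩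
  · rw [dist_comm]
    exact dist_eq_iff_dist_coe_center_eq.2 hx₁
  · rw [dist_comm] at hp₁
    exact UpperHalfPlane.ext <| hx_unique p
      ⟨dist_eq_iff_dist_coe_center_eq.1 hp₁, dist_eq_iff_dist_coe_center_eq.1 hp₂⟩

end UpperHalfPlane

theorem exists_unique_cosh_ratio_point_general
    (p₁ p₂ : UpperHalfPlane) (r₁ r₂ : ℝ)
    (hr₁ : r₁ ∈ Set.Ioo 0 (dist p₁ p₂)) (hr₂ : r₂ ∈ Set.Ioo 0 (dist p₁ p₂)) :
    ∃! p₀ : UpperHalfPlane,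
      dist p₁ p₀ + dist p₀ p₂ = dist p₁ p₂ ∧
      Real.cosh (dist p₀ p₁) / Real.cosh r₁ =
        Real.cosh (dist p₀ p₂) / Real.cosh r₂ := by
  set d := dist p₁ p₂
  obtain ⟨t, ⟨ht, hcosh⟩, ht_unique⟩ := existsUnique_cosh_div_eq_cosh_sub_div
    ((abs_of_pos hr₁.1).trans_le hr₁.2.le) ((abs_of_pos hr₂.1).trans_le hr₂.2.le)
  obtain ⟨p₀, ⟨hp₀₁, hp₀₂⟩, hp₀_unique⟩ :=
    existsUnique_dist_eq_and_dist_eq ht.1 (sub_nonneg.2 ht.2) (add_sub_cancel t d)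
  refine ⟨p₀, ⟨by rw [hp₀₁, hp₀₂, add_sub_cancel], by rwa [dist_comm, hp₀₁, hp₀₂]⟩, ?_⟩
  rintro q ⟨hq_sum, hq_cosh⟩
  have hq₂ : dist q p₂ = d - dist p₁ q := eq_sub_of_add_eq' hq_sum
  have hq₁ : dist p₁ q = t := ht_unique _
    ⟨⟨dist_nonneg, hq_sum ▸ le_add_of_nonneg_right dist_nonneg⟩,
      by rwa [dist_comm, hq₂] at hq_cosh⟩
  exact hp₀_unique q ⟨hq₁, hq₁ ▸ hq₂⟩

/-- On the geodesic segment between two points `p₁, p₂` of the hyperbolic plane at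
distance `d > 0`, with `r₁, r₂ ∈ (0, d)`, there is a unique point `p₀` where
`cosh (dist p₀ p₁) / cosh r₁ = cosh (dist p₀ p₂) / cosh r₂`. -/
theorem exists_unique_cosh_ratio_point
    (p₁ p₂ : UpperHalfPlane) (r₁ r₂ : ℝ)
    (hd : 0 < dist p₁ p₂)
    (hr₁ : r₁ ∈ Set.Ioo 0 (dist p₁ p₂)) (hr₂ : r₂ ∈ Set.Ioo 0 (dist p₁ p₂)) :
    ∃! p₀ : UpperHalfPlane,
      dist p₁ p₀ + dist p₀ p₂ = dist p₁ p₂ ∧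
      Real.cosh (dist p₀ p₁) / Real.cosh r₁ =
        Real.cosh (dist p₀ p₂) / Real.cosh r₂ :=
  exists_unique_cosh_ratio_point_general p₁ p₂ r₁ r₂ hr₁ hr₂
end

section
/- Let p₁, p₂ ∈ ℍ² with d = dist(p₁,p₂) > 0 and r₁, r₂ ∈ (0,d). The set {q ∈ ℍ² : cosh(dist(q,p₁))/cosh(r₁) = cosh(dist(q,p₂))/cosh(r₂)} equals the complete geodesic through the point p₀ (the unique point on the segment p₁p₂ where equality holds) orthogonal to the geodesic through p₁ and p₂. -/
set_option maxHeartbeats 1000000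


open Real UpperHalfPlane

/-- A geodesic of the hyperbolic plane: an isometric embedding of `ℝ`. -/
def IsGeodesic (γ : ℝ → UpperHalfPlane) : Prop :=
  ∀ s t : ℝ, dist (γ s) (γ t) = |s - t|

noncomputable def TE (c : ℝ) : UpperHalfPlane ≃ᵢ UpperHalfPlane :=
  { toEquiv :=
      { toFun := (c +ᵥ ·)
        invFun := (-c +ᵥ ·)
        left_inv := fun z => by
          apply UpperHalfPlane.ext
          simp only [UpperHalfPlane.coe_vadd]
          push_cast
          ring
        right_inv := fun z => by
          apply UpperHalfPlane.ext
          simp only [UpperHalfPlane.coe_vadd]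
          push_cast
          ring }
    isometry_toFun := UpperHalfPlane.isometry_real_vadd c }

lemma TE_re (c : ℝ) (z : UpperHalfPlane) : (TE c z).re = c + z.re := UpperHalfPlane.vadd_re c z
lemma TE_im (c : ℝ) (z : UpperHalfPlane) : (TE c z).im = z.im := UpperHalfPlane.vadd_im c z

noncomputable def Sm : Matrix.SpecialLinearGroup (Fin 2) ℝ :=
  ⟨!![0, -1; 1, 0], by norm_num [Matrix.det_fin_two_of]⟩

noncomputable def JE : UpperHalfPlane ≃ᵢ UpperHalfPlane := IsometryEquiv.constSMul Sm

lemma JE_coe (z : UpperHalfPlane) : (JE z : ℂ) = -(z : ℂ)⁻¹ := by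
  have h : JE z = Sm • z := rfl
  rw [h, UpperHalfPlane.specialLinearGroup_apply, UpperHalfPlane.coe_mk]
  simp [Sm]
  field_simp

lemma JE_re (z : UpperHalfPlane) :
    (JE z).re = -(z.re / ((z.re) ^ 2 + (z.im) ^ 2)) := by
  have h : (JE z).re = ((JE z : ℂ)).re := (UpperHalfPlane.coe_re _).symm
  rw [h, JE_coe]
  rw [Complex.neg_re, Complex.inv_re, Complex.normSq_apply]
  simp [UpperHalfPlane.coe_re, UpperHalfPlane.coe_im, sq]
open Real UpperHalfPlane

noncomputable def mu (ρ : ℝ) (hρ : 0 < ρ) (s : ℝ) : UpperHalfPlane :=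
  UpperHalfPlane.mk ⟨ρ * Real.sinh s / Real.cosh s, ρ / Real.cosh s⟩
    (by positivity)

lemma mu_re (ρ : ℝ) (hρ : 0 < ρ) (s : ℝ) : (mu ρ hρ s).re = ρ * Real.sinh s / Real.cosh s := rfl
lemma mu_im (ρ : ℝ) (hρ : 0 < ρ) (s : ℝ) : (mu ρ hρ s).im = ρ / Real.cosh s := rfl

lemma cosh_dist_coords (z w : UpperHalfPlane) :
    Real.cosh (dist z w) * (2 * z.im * w.im) =
      (z.re - w.re) ^ 2 + z.im ^ 2 + w.im ^ 2 := by
  have h := UpperHalfPlane.cosh_dist z w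
  have h2 : dist (z : ℂ) (w : ℂ) ^ 2 = (z.re - w.re) ^ 2 + (z.im - w.im) ^ 2 := by
    rw [Complex.dist_eq_re_im, Real.sq_sqrt (by positivity)]
    simp [UpperHalfPlane.coe_re, UpperHalfPlane.coe_im]
  have hz := z.im_pos
  have hw := w.im_pos
  rw [h, h2]
  field_simp
  ring

lemma cosh_dist_mu (ρ : ℝ) (hρ : 0 < ρ) (s : ℝ) (w : UpperHalfPlane) (hw : w.re = 0) :
    Real.cosh (dist (mu ρ hρ s) w) =
      Real.cosh s * ((ρ ^ 2 + w.im ^ 2) / (2 * ρ * w.im)) := by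
  have h := cosh_dist_coords (mu ρ hρ s) w
  rw [mu_re, mu_im, hw] at h
  have hv := w.im_pos
  have hc := Real.cosh_pos s
  have hs := Real.cosh_sq s
  have hne : (2 * (ρ / Real.cosh s) * w.im) ≠ 0 := by positivity
  have key : Real.cosh (dist (mu ρ hρ s) w) * (2 * (ρ / Real.cosh s) * w.im) =
      (Real.cosh s * ((ρ ^ 2 + w.im ^ 2) / (2 * ρ * w.im))) * (2 * (ρ / Real.cosh s) * w.im) := by
    rw [h]
    field_simp
    linear_combination (-(ρ ^ 2)) * hs
  exact mul_right_cancel₀ hne key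

lemma cosh_dist_mu_mu (ρ : ℝ) (hρ : 0 < ρ) (s t : ℝ) :
    Real.cosh (dist (mu ρ hρ s) (mu ρ hρ t)) = Real.cosh (s - t) := by
  have h := cosh_dist_coords (mu ρ hρ s) (mu ρ hρ t)
  rw [mu_re, mu_im, mu_re, mu_im] at h
  have hcs := Real.cosh_pos s
  have hct := Real.cosh_pos t
  have hs := Real.cosh_sq s
  have ht := Real.cosh_sq t
  have hne : (2 * (ρ / Real.cosh s) * (ρ / Real.cosh t)) ≠ 0 := by positivity
  have key : Real.cosh (dist (mu ρ hρ s) (mu ρ hρ t)) * (2 * (ρ / Real.cosh s) * (ρ / Real.cosh t)) =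
      Real.cosh (s - t) * (2 * (ρ / Real.cosh s) * (ρ / Real.cosh t)) := by
    rw [h, Real.cosh_sub]
    field_simp
    linear_combination (-(Real.cosh t ^ 2)) * hs + (-(Real.cosh s ^ 2)) * ht
  exact mul_right_cancel₀ hne key

lemma mu_isGeodesic (ρ : ℝ) (hρ : 0 < ρ) (s t : ℝ) :
    dist (mu ρ hρ s) (mu ρ hρ t) = |s - t| := by
  have h := cosh_dist_mu_mu ρ hρ s t
  have h1 : |dist (mu ρ hρ s) (mu ρ hρ t)| = |s - t| :=
    le_antisymm (Real.cosh_le_cosh.mp h.le) (Real.cosh_le_cosh.mp h.ge)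
  rwa [abs_of_nonneg dist_nonneg] at h1

lemma re_eq_zero_of_identity (p₁ p₂ q : UpperHalfPlane) (h1 : p₁.re = 0) (h2 : p₂.re = 0)
    (hne : p₁.im ≠ p₂.im)
    (key : (Real.cosh (dist p₁ p₂) - Real.cosh (dist q p₁) * Real.cosh (dist q p₂)) ^ 2
         = (Real.cosh (dist q p₁) ^ 2 - 1) * (Real.cosh (dist q p₂) ^ 2 - 1)) :
    q.re = 0 := by
  have hy := q.im_pos
  have hu₁ := p₁.im_pos
  have hu₂ := p₂.im_pos
  have e1 := cosh_dist_coords q p₁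
  have e2 := cosh_dist_coords q p₂
  have e3 := cosh_dist_coords p₁ p₂
  rw [h1] at e1 e3
  rw [h2] at e2 e3
  ring_nf at e1 e2 e3
  have hC1 : Real.cosh (dist q p₁) = (q.re ^ 2 + q.im ^ 2 + p₁.im ^ 2) / (2 * q.im * p₁.im) := by
    field_simp
    linarith [e1]
  have hC2 : Real.cosh (dist q p₂) = (q.re ^ 2 + q.im ^ 2 + p₂.im ^ 2) / (2 * q.im * p₂.im) := by
    field_simp
    linarith [e2]
  have hC3 : Real.cosh (dist p₁ p₂) = (p₁.im ^ 2 + p₂.im ^ 2) / (2 * p₁.im * p₂.im) := by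
    field_simp
    linarith [e3]
  rw [hC1, hC2, hC3] at key
  have hq : q.re ^ 2 * (4 * q.im ^ 2 * (p₁.im ^ 2 - p₂.im ^ 2) ^ 2) *
      ((2 * q.im * p₁.im) * (2 * q.im * p₂.im) * (2 * p₁.im * p₂.im)) ^ 2 = 0 := by
    field_simp at key
    linear_combination (-64 * q.im ^ 4 * p₁.im ^ 4 * p₂.im ^ 4) * key
  have hne2 : (p₁.im ^ 2 - p₂.im ^ 2) ≠ 0 := by
    intro h
    apply hne
    nlinarith
  have : q.re ^ 2 = 0 := by
    have h4 : 0 < 4 * q.im ^ 2 * (p₁.im ^ 2 - p₂.im ^ 2) ^ 2 *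
        ((2 * q.im * p₁.im) * (2 * q.im * p₂.im) * (2 * p₁.im * p₂.im)) ^ 2 := by positivity
    nlinarith [sq_nonneg q.re, hq]
  exact pow_eq_zero_iff (by norm_num) |>.mp this



theorem special_case
    (p₁ p₂ : UpperHalfPlane) (r₁ r₂ : ℝ)
    (hd : 0 < dist p₁ p₂)
    (γ : ℝ → UpperHalfPlane) (hγ : IsGeodesic γ)
    (a b : ℝ) (ha : γ a = p₁) (hb : γ b = p₂)
    (p₀ : UpperHalfPlane)
    (hseg : dist p₁ p₀ + dist p₀ p₂ = dist p₁ p₂)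
    (heq : Real.cosh (dist p₀ p₁) / Real.cosh r₁ =
      Real.cosh (dist p₀ p₂) / Real.cosh r₂)
    (h1 : p₁.re = 0) (h2 : p₂.re = 0) :
    ∃ μ : ℝ → UpperHalfPlane, IsGeodesic μ ∧ μ 0 = p₀ ∧
      (∀ s t : ℝ, Real.cosh (dist (μ s) (γ t)) =
        Real.cosh (dist (μ s) p₀) * Real.cosh (dist p₀ (γ t))) ∧
      {q : UpperHalfPlane |
          Real.cosh (dist q p₁) / Real.cosh r₁ =
            Real.cosh (dist q p₂) / Real.cosh r₂} = Set.range μ := by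
  have hu₁ := p₁.im_pos
  have hu₂ := p₂.im_pos
  have hne : p₁.im ≠ p₂.im := by
    intro h
    rw [UpperHalfPlane.ext' (h1.trans h2.symm) h] at hd
    simp at hd
  -- p₀ lies on the imaginary axis
  have hx₀ : p₀.re = 0 := by
    apply re_eq_zero_of_identity p₁ p₂ p₀ h1 h2 hne
    have hc : Real.cosh (dist p₁ p₂) =
        Real.cosh (dist p₀ p₁) * Real.cosh (dist p₀ p₂) +
          Real.sinh (dist p₀ p₁) * Real.sinh (dist p₀ p₂) := by
      rw [← hseg, dist_comm p₁ p₀, Real.cosh_add]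
    rw [hc]
    have hs1 := Real.sinh_sq (dist p₀ p₁)
    have hs2 := Real.sinh_sq (dist p₀ p₂)
    linear_combination (Real.sinh (dist p₀ p₂) ^ 2) * hs1 +
      (Real.cosh (dist p₀ p₁) ^ 2 - 1) * hs2
  -- γ lies on the imaginary axis
  have hγre : ∀ t, (γ t).re = 0 := by
    intro t
    apply re_eq_zero_of_identity p₁ p₂ (γ t) h1 h2 hne
    have d1 : dist (γ t) p₁ = |t - a| := by rw [← ha, hγ]
    have d2 : dist (γ t) p₂ = |t - b| := by rw [← hb, hγ]
    have dD : dist p₁ p₂ = |a - b| := by rw [← ha, ← hb, hγ]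
    rw [d1, d2, dD, Real.cosh_abs, Real.cosh_abs, Real.cosh_abs]
    have h := Real.cosh_sub (t - b) (t - a)
    rw [show (t - b) - (t - a) = a - b by ring] at h
    rw [h]
    have hs1 := Real.sinh_sq (t - a)
    have hs2 := Real.sinh_sq (t - b)
    linear_combination (Real.sinh (t - b) ^ 2) * hs1 +
      (Real.cosh (t - a) ^ 2 - 1) * hs2
  obtain ⟨ρ, hρdef⟩ : ∃ ρ : ℝ, ρ = p₀.im := ⟨_, rfl⟩
  have hρ : 0 < ρ := hρdef ▸ p₀.im_pos
  have hchr₁ := Real.cosh_pos r₁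
  have hchr₂ := Real.cosh_pos r₂
  -- the basic membership criterion
  have key : ∀ q : UpperHalfPlane,
      (Real.cosh (dist q p₁) / Real.cosh r₁ = Real.cosh (dist q p₂) / Real.cosh r₂) ↔
      (q.re ^ 2 + q.im ^ 2 + p₁.im ^ 2) * (p₂.im * Real.cosh r₂) =
        (q.re ^ 2 + q.im ^ 2 + p₂.im ^ 2) * (p₁.im * Real.cosh r₁) := by
    intro q
    have hy := q.im_pos
    have e1 := cosh_dist_coords q p₁
    have e2 := cosh_dist_coords q p₂
    rw [h1] at e1
    rw [h2] at e2
    have hC1 : Real.cosh (dist q p₁) =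
        (q.re ^ 2 + q.im ^ 2 + p₁.im ^ 2) / (2 * q.im * p₁.im) := by
      field_simp
      nlinarith [e1]
    have hC2 : Real.cosh (dist q p₂) =
        (q.re ^ 2 + q.im ^ 2 + p₂.im ^ 2) / (2 * q.im * p₂.im) := by
      field_simp
      nlinarith [e2]
    rw [hC1, hC2, div_div, div_div,
      div_eq_div_iff (by positivity) (by positivity)]
    constructor
    · intro hh
      have hh' : (2 * q.im) * ((q.re ^ 2 + q.im ^ 2 + p₁.im ^ 2) * (p₂.im * Real.cosh r₂)) =
          (2 * q.im) * ((q.re ^ 2 + q.im ^ 2 + p₂.im ^ 2) * (p₁.im * Real.cosh r₁)) := by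
        linear_combination hh
      exact mul_left_cancel₀ (by positivity) hh'
    · intro hh
      linear_combination (2 * q.im) * hh
  -- p₀'s equation
  have E0 : (ρ ^ 2 + p₁.im ^ 2) * (p₂.im * Real.cosh r₂) =
      (ρ ^ 2 + p₂.im ^ 2) * (p₁.im * Real.cosh r₁) := by
    have h5 := (key p₀).mp heq
    rw [hx₀, ← hρdef] at h5
    linarith [h5]
  have hcc : p₁.im * Real.cosh r₁ ≠ p₂.im * Real.cosh r₂ := by
    intro h
    rw [h] at E0
    have h3 : p₁.im ^ 2 * (p₂.im * Real.cosh r₂) = p₂.im ^ 2 * (p₂.im * Real.cosh r₂) := by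
      linear_combination E0
    have h4 : p₁.im ^ 2 = p₂.im ^ 2 :=
      mul_right_cancel₀ (by positivity) h3
    exact hne (by nlinarith)
  refine ⟨mu ρ hρ, fun s t => mu_isGeodesic ρ hρ s t, ?_, ?_, ?_⟩
  · apply UpperHalfPlane.ext'
    · rw [mu_re, Real.sinh_zero, hx₀]
      ring
    · rw [mu_im, Real.cosh_zero, div_one]
      exact hρdef
  · intro s t
    have hA := cosh_dist_mu ρ hρ s (γ t) (hγre t)
    have hB := cosh_dist_mu ρ hρ s p₀ hx₀
    rw [← hρdef] at hB
    have hv := (γ t).im_pos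
    have e3 := cosh_dist_coords p₀ (γ t)
    rw [hx₀, hγre t, ← hρdef] at e3
    have hC : Real.cosh (dist p₀ (γ t)) =
        (ρ ^ 2 + (γ t).im ^ 2) / (2 * ρ * (γ t).im) := by
      field_simp
      nlinarith [e3]
    rw [hA, hB, hC]
    field_simp
    ring
  · ext q
    simp only [Set.mem_setOf_eq, Set.mem_range]
    rw [key q]
    have hy := q.im_pos
    constructor
    · intro hh
      have h3 : (q.re ^ 2 + q.im ^ 2 - ρ ^ 2) *
          (p₂.im * Real.cosh r₂ - p₁.im * Real.cosh r₁) = 0 := by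
        linear_combination hh - E0
      have hA : q.re ^ 2 + q.im ^ 2 = ρ ^ 2 := by
        rcases mul_eq_zero.mp h3 with h4 | h4
        · linarith [h4]
        · exact absurd (by linarith [h4]) hcc.symm
      refine ⟨Real.arsinh (q.re / q.im), ?_⟩
      have hch : Real.cosh (Real.arsinh (q.re / q.im)) = ρ / q.im := by
        rw [Real.cosh_arsinh,
          show (1 + (q.re / q.im) ^ 2) = (ρ / q.im) ^ 2 by field_simp; linarith [hA],
          Real.sqrt_sq (by positivity)]
      apply UpperHalfPlane.ext'
      · rw [mu_re, Real.sinh_arsinh, hch]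
        field_simp
      · rw [mu_im, hch]
        field_simp
    · rintro ⟨s, rfl⟩
      have hcs := Real.cosh_pos s
      have hA : (mu ρ hρ s).re ^ 2 + (mu ρ hρ s).im ^ 2 = ρ ^ 2 := by
        rw [mu_re, mu_im]
        have hs := Real.cosh_sq s
        field_simp
        linear_combination (-1 : ℝ) * hs
      linear_combination E0 + (p₂.im * Real.cosh r₂ - p₁.im * Real.cosh r₁) * hA


/-- The cosh-ratio weighted bisector of two points of the hyperbolic plane is the
complete geodesic through the point `p₀` of the segment `p₁p₂` where equality holds,
orthogonal to the geodesic through `p₁` and `p₂` (orthogonality expressed via the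
hyperbolic Pythagorean identity). -/
theorem cosh_ratio_bisector_is_geodesic
    (p₁ p₂ : UpperHalfPlane) (r₁ r₂ : ℝ)
    (hd : 0 < dist p₁ p₂)
    (hr₁ : r₁ ∈ Set.Ioo 0 (dist p₁ p₂)) (hr₂ : r₂ ∈ Set.Ioo 0 (dist p₁ p₂))
    (γ : ℝ → UpperHalfPlane) (hγ : IsGeodesic γ)
    (a b : ℝ) (ha : γ a = p₁) (hb : γ b = p₂)
    (p₀ : UpperHalfPlane)
    (hseg : dist p₁ p₀ + dist p₀ p₂ = dist p₁ p₂)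
    (heq : Real.cosh (dist p₀ p₁) / Real.cosh r₁ =
      Real.cosh (dist p₀ p₂) / Real.cosh r₂) :
    ∃ μ : ℝ → UpperHalfPlane, IsGeodesic μ ∧ μ 0 = p₀ ∧
      (∀ s t : ℝ, Real.cosh (dist (μ s) (γ t)) =
        Real.cosh (dist (μ s) p₀) * Real.cosh (dist p₀ (γ t))) ∧
      {q : UpperHalfPlane |
          Real.cosh (dist q p₁) / Real.cosh r₁ =
            Real.cosh (dist q p₂) / Real.cosh r₂} = Set.range μ := by
  -- Find an isometry moving `p₁, p₂` to the imaginary axis.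
  obtain ⟨e, he₁, he₂⟩ : ∃ e : UpperHalfPlane ≃ᵢ UpperHalfPlane,
      (e p₁).re = 0 ∧ (e p₂).re = 0 := by
    by_cases hre : p₁.re = p₂.re
    · refine ⟨TE (-p₁.re), ?_, ?_⟩
      · rw [TE_re]; ring
      · rw [TE_re, ← hre]; ring
    · have hxne : p₂.re - p₁.re ≠ 0 := sub_ne_zero.mpr (Ne.symm hre)
      set m : ℝ := (p₂.re ^ 2 + p₂.im ^ 2 - p₁.re ^ 2 - p₁.im ^ 2) / (2 * (p₂.re - p₁.re))
        with hm_def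
      have hm : (p₁.re - m) ^ 2 + p₁.im ^ 2 = (p₂.re - m) ^ 2 + p₂.im ^ 2 := by
        rw [hm_def]
        field_simp
        ring
      set R : ℝ := Real.sqrt ((p₁.re - m) ^ 2 + p₁.im ^ 2) with hR_def
      have hR : 0 < R := Real.sqrt_pos.mpr (by positivity)
      have hR1 : (p₁.re - m) ^ 2 + p₁.im ^ 2 = R ^ 2 := by
        rw [hR_def, Real.sq_sqrt (by positivity)]
      have hR2 : (p₂.re - m) ^ 2 + p₂.im ^ 2 = R ^ 2 := by rw [← hm, hR1]
      have main : ∀ p : UpperHalfPlane, (p.re - m) ^ 2 + p.im ^ 2 = R ^ 2 →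
          ((TE (R - m)).trans (JE.trans (TE (1 / (2 * R)))) p).re = 0 := by
        intro p hp
        have hpim := p.im_pos
        have hw : 0 < p.re - m + R := by nlinarith [sq_nonneg (p.re - m + R)]
        rw [IsometryEquiv.trans_apply, IsometryEquiv.trans_apply, TE_re, JE_re,
          TE_re, TE_im]
        have hns : (R - m + p.re) ^ 2 + p.im ^ 2 = 2 * R * (p.re - m + R) := by
          nlinarith [hp]
        rw [hns]
        field_simp
        ring
      exact ⟨(TE (R - m)).trans (JE.trans (TE (1 / (2 * R)))), main p₁ hR1, main p₂ hR2⟩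
  -- Transfer the problem along `e`.
  have hd' : 0 < dist (e p₁) (e p₂) := by rwa [e.dist_eq]
  obtain ⟨μ', hgeo', h0', hperp', hset'⟩ :=
    special_case (e p₁) (e p₂) r₁ r₂ hd'
      (fun t => e (γ t)) (fun s t => by rw [e.dist_eq]; exact hγ s t)
      a b (by simp only [ha]) (by simp only [hb]) (e p₀)
      (by rw [e.dist_eq, e.dist_eq, e.dist_eq]; exact hseg)
      (by rw [e.dist_eq, e.dist_eq]; exact heq)
      he₁ he₂
  refine ⟨fun s => e.symm (μ' s), ?_, ?_, ?_, ?_⟩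
  · intro s t
    rw [e.symm.dist_eq]
    exact hgeo' s t
  · show e.symm (μ' 0) = p₀
    rw [h0']
    exact e.symm_apply_apply p₀
  · intro s t
    have k1 : dist (e.symm (μ' s)) (γ t) = dist (μ' s) (e (γ t)) := by
      rw [← e.dist_eq, e.apply_symm_apply]
    have k2 : dist (e.symm (μ' s)) p₀ = dist (μ' s) (e p₀) := by
      rw [← e.dist_eq, e.apply_symm_apply]
    have k3 : dist p₀ (γ t) = dist (e p₀) (e (γ t)) := (e.dist_eq _ _).symm
    rw [k1, k2, k3]
    exact hperp' s t
  · ext q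
    simp only [Set.mem_setOf_eq, Set.mem_range]
    constructor
    · intro hq
      have hmem : e q ∈ {q' : UpperHalfPlane |
          Real.cosh (dist q' (e p₁)) / Real.cosh r₁ =
            Real.cosh (dist q' (e p₂)) / Real.cosh r₂} := by
        simp only [Set.mem_setOf_eq, e.dist_eq]
        exact hq
      rw [hset'] at hmem
      obtain ⟨s, hs⟩ := hmem
      exact ⟨s, by rw [hs]; exact e.symm_apply_apply q⟩
    · rintro ⟨s, rfl⟩
      have hmem : μ' s ∈ Set.range μ' := ⟨s, rfl⟩
      rw [← hset'] at hmem
      simp only [Set.mem_setOf_eq] at hmem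
      have k1 : dist (e.symm (μ' s)) p₁ = dist (μ' s) (e p₁) := by
        rw [← e.dist_eq, e.apply_symm_apply]
      have k2 : dist (e.symm (μ' s)) p₂ = dist (μ' s) (e p₂) := by
        rw [← e.dist_eq, e.apply_symm_apply]
      rw [k1, k2]
      exact hmem
end

section
/- Let p₁, p₂ ∈ ℍ² with d = dist(p₁,p₂) > 0 and r₁, r₂ ∈ (0,d), and let p₀ be on the segment p₁p₂ with cosh(dist(p₀,p₁))/cosh(r₁) = cosh(dist(p₀,p₂))/cosh(r₂). If q lies on the geodesic through p₁ and p₂ strictly on the same side of p₀ as p₁ (i.e., dist(q,p₀) > 0 and dist(q,p₁) < dist(p₀,p₁) or q is beyond p₁), then cosh(dist(q,p₁))/cosh(r₁) < cosh(dist(q,p₂))/cosh(r₂). -/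
open Real UpperHalfPlane

lemma IsGeodesic.cosh_dist {γ : ℝ → UpperHalfPlane} (hγ : IsGeodesic γ) (s t : ℝ) :
    cosh (dist (γ s) (γ t)) = cosh (s - t) := by
  rw [hγ, cosh_abs]

lemma cosh_sub_div_sub_cosh_sub_div (a b c₁ c₂ t : ℝ) :
    cosh (t - a) / c₁ - cosh (t - b) / c₂ =
      cosh t * (cosh a / c₁ - cosh b / c₂) + sinh t * (sinh b / c₂ - sinh a / c₁) := by
  rw [cosh_sub, cosh_sub]
  ring

/-- The balance condition at `0` kills the `cosh t` coefficient above, leaving `sinh t` times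
a positive constant. -/
lemma cosh_sub_div_lt_of_cosh_div_eq {a b c₁ c₂ t : ℝ} (hc₁ : 0 < c₁) (hc₂ : 0 < c₂)
    (ha : a < 0) (hb : 0 < b) (heq : cosh a / c₁ = cosh b / c₂) (ht : t < 0) :
    cosh (t - a) / c₁ < cosh (t - b) / c₂ := by
  have hslope : 0 < sinh b / c₂ - sinh a / c₁ :=
    sub_pos.2 ((div_neg_of_neg_of_pos (sinh_neg_iff.2 ha) hc₁).trans
      (div_pos (sinh_pos_iff.2 hb) hc₂))
  rw [← sub_neg, cosh_sub_div_sub_cosh_sub_div, heq, sub_self, mul_zero, zero_add]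
  exact mul_neg_of_neg_of_pos (sinh_neg_iff.2 ht) hslope

theorem cosh_ratio_strict_on_p₁_side_general
    (p₁ p₂ : UpperHalfPlane) (r₁ r₂ : ℝ)
    (γ : ℝ → UpperHalfPlane) (hγ : IsGeodesic γ)
    (a b : ℝ) (ha : γ a = p₁) (hb : γ b = p₂) (hab : a < 0) (hb0 : 0 < b)
    (heq : Real.cosh (dist (γ 0) p₁) / Real.cosh r₁ =
      Real.cosh (dist (γ 0) p₂) / Real.cosh r₂)
    (t : ℝ) (ht : t < 0) :
    Real.cosh (dist (γ t) p₁) / Real.cosh r₁ <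
      Real.cosh (dist (γ t) p₂) / Real.cosh r₂ := by
  subst ha hb
  rw [hγ.cosh_dist, hγ.cosh_dist] at heq ⊢
  rw [zero_sub, zero_sub, cosh_neg, cosh_neg] at heq
  exact cosh_sub_div_lt_of_cosh_div_eq (cosh_pos r₁) (cosh_pos r₂) hab hb0 heq ht

/-- On the geodesic through `p₁` and `p₂`, strictly on the same side of the balance
point `p₀` as `p₁`, the cosh-ratio inequality is strict. -/
theorem cosh_ratio_strict_on_p₁_side
    (p₁ p₂ : UpperHalfPlane) (r₁ r₂ : ℝ)
    (hd : 0 < dist p₁ p₂)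
    (hr₁ : r₁ ∈ Set.Ioo 0 (dist p₁ p₂)) (hr₂ : r₂ ∈ Set.Ioo 0 (dist p₁ p₂))
    (γ : ℝ → UpperHalfPlane) (hγ : IsGeodesic γ)
    (a b : ℝ) (ha : γ a = p₁) (hb : γ b = p₂) (hab : a < 0) (hb0 : 0 < b)
    (heq : Real.cosh (dist (γ 0) p₁) / Real.cosh r₁ =
      Real.cosh (dist (γ 0) p₂) / Real.cosh r₂)
    (t : ℝ) (ht : t < 0) :
    Real.cosh (dist (γ t) p₁) / Real.cosh r₁ <
      Real.cosh (dist (γ t) p₂) / Real.cosh r₂ :=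
  cosh_ratio_strict_on_p₁_side_general p₁ p₂ r₁ r₂ γ hγ a b ha hb hab hb0 heq t ht
end

section
/- Given the identities cosh(AB)·tanh(BC) = tanh(AD) and tanh(CD) = tanh(AB)·cosh(BC) for positive reals AB, BC, CD, AD with tanh(AD) > tanh(BC), it follows that cosh(CD)·sinh(BC) = sinh(AD). -/
/-!
Since `1 - tanh² = cosh⁻²`, the two hypotheses turn the identity
`cosh² b - cosh² a sinh² b = cosh² a - sinh² a cosh² b` into `cosh a cosh d = cosh b cosh c`.
Then `sinh d = cosh d · tanh d = cosh a cosh d · tanh b = cosh b cosh c · tanh b = cosh c sinh b`.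
-/

open Real

namespace Real

theorem one_sub_tanh_sq (x : ℝ) : 1 - tanh x ^ 2 = (cosh x ^ 2)⁻¹ := by
  have := (cosh_pos x).ne'
  rw [tanh_eq_sinh_div_cosh]
  field_simp
  linarith [cosh_sq x]

theorem cosh_sq_mul_one_sub_cosh_mul_tanh_sq (x y : ℝ) :
    cosh y ^ 2 * (1 - (cosh x * tanh y) ^ 2) = cosh x ^ 2 * (1 - (tanh x * cosh y) ^ 2) := by
  have := (cosh_pos x).ne'
  have := (cosh_pos y).ne'
  simp only [tanh_eq_sinh_div_cosh]
  field_simp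
  linear_combination (1 + sinh x ^ 2) * cosh_sq y - (1 + sinh y ^ 2) * cosh_sq x

theorem cosh_mul_cosh_eq_of_cosh_mul_tanh_eq {a b c d : ℝ} (h₁ : cosh a * tanh b = tanh d)
    (h₂ : tanh c = tanh a * cosh b) : cosh a * cosh d = cosh b * cosh c := by
  have hsq : cosh b ^ 2 * (cosh d ^ 2)⁻¹ = cosh a ^ 2 * (cosh c ^ 2)⁻¹ := by
    rw [← one_sub_tanh_sq, ← one_sub_tanh_sq, ← h₁, h₂]
    exact cosh_sq_mul_one_sub_cosh_mul_tanh_sq a b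
  have := (cosh_pos c).ne'
  have := (cosh_pos d).ne'
  refine (pow_left_inj₀ (by positivity) (by positivity) two_ne_zero).1 ?_
  field_simp at hsq
  linear_combination -hsq

end Real

theorem lambert_algebraic_general (a b c d : ℝ)
    (h₁ : Real.cosh a * Real.tanh b = Real.tanh d)
    (h₂ : Real.tanh c = Real.tanh a * Real.cosh b) :
    Real.cosh c * Real.sinh b = Real.sinh d := by
  have hcosh := cosh_mul_cosh_eq_of_cosh_mul_tanh_eq h₁ h₂
  have := (cosh_pos b).ne'
  have := (cosh_pos d).ne'
  calc cosh c * sinh b = cosh b * cosh c * tanh b := by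
        rw [tanh_eq_sinh_div_cosh]; field_simp
    _ = tanh d * cosh d := by rw [← hcosh, ← h₁]; ring
    _ = sinh d := by rw [tanh_eq_sinh_div_cosh]; field_simp

/-- Algebraic hyperbolic-trigonometric deduction: from
`cosh a · tanh b = tanh d` and `tanh c = tanh a · cosh b` with `tanh b < tanh d`,
conclude `cosh c · sinh b = sinh d`. -/
theorem lambert_algebraic (a b c d : ℝ)
    (ha : 0 < a) (hb : 0 < b) (hc : 0 < c) (hd : 0 < d)
    (h₁ : Real.cosh a * Real.tanh b = Real.tanh d)
    (h₂ : Real.tanh c = Real.tanh a * Real.cosh b)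
    (h₃ : Real.tanh b < Real.tanh d) :
    Real.cosh c * Real.sinh b = Real.sinh d :=
  lambert_algebraic_general a b c d h₁ h₂
end

section
/- Let γ₁, γ₂ be disjoint complete geodesics in ℍ² with common perpendicular meeting γᵢ at pᵢ, and r₁, r₂ > 0. There is a unique point p₀ on the segment p₁p₂ with r₁·sinh(dist(p₀,γ₁)) = r₂·sinh(dist(p₀,γ₂)), and for any point q on the common perpendicular strictly between p₀ and p₁, we have r₁·sinh(dist(q,γ₁)) < r₂·sinh(dist(q,γ₂)). -/
open Real UpperHalfPlane Metric

/-- Tangency: the Euclidean circles underlying two hyperbolic circles whose radii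
add up to the hyperbolic distance between the centers are externally tangent. -/
lemma aux_tangent (p₁ p₂ : UpperHalfPlane) {t s : ℝ} (ht : 0 ≤ t) (hs : 0 ≤ s)
    (hts : t + s = dist p₁ p₂) :
    dist (p₁.center t : ℂ) (p₂.center s : ℂ)
      = p₁.im * Real.sinh t + p₂.im * Real.sinh s := by
  have hb := p₁.im_pos
  have hd := p₂.im_pos
  have hsq : dist (p₁ : ℂ) (p₂ : ℂ) ^ 2
      = (p₁.re - p₂.re) ^ 2 + (p₁.im - p₂.im) ^ 2 := by
    rw [Complex.dist_eq_re_im, Real.sq_sqrt (by positivity)]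
    simp [UpperHalfPlane.coe_re, UpperHalfPlane.coe_im]
  have hcosh : Real.cosh (dist p₁ p₂) = 1 + dist (p₁ : ℂ) p₂ ^ 2 / (2 * p₁.im * p₂.im) :=
    UpperHalfPlane.cosh_dist p₁ p₂
  have hF1 : (p₁.re - p₂.re) ^ 2 + (p₁.im - p₂.im) ^ 2
      = 2 * p₁.im * p₂.im * (Real.cosh t * Real.cosh s + Real.sinh t * Real.sinh s - 1) := by
    rw [← hsq, ← Real.cosh_add, hts]
    field_simp at hcosh ⊢
    linarith
  have key : (p₁.re - p₂.re) ^ 2 + (p₁.im * Real.cosh t - p₂.im * Real.cosh s) ^ 2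
      = (p₁.im * Real.sinh t + p₂.im * Real.sinh s) ^ 2 := by
    have h2 := Real.cosh_sq t
    have h3 := Real.cosh_sq s
    linear_combination hF1 + p₁.im ^ 2 * h2 + p₂.im ^ 2 * h3
  have hdd : dist (p₁.center t : ℂ) (p₂.center s : ℂ) ^ 2
      = (p₁.re - p₂.re) ^ 2 + (p₁.im * Real.cosh t - p₂.im * Real.cosh s) ^ 2 := by
    rw [Complex.dist_eq_re_im, Real.sq_sqrt (by positivity)]
    simp [UpperHalfPlane.center]
  have hR : 0 ≤ p₁.im * Real.sinh t + p₂.im * Real.sinh s := by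
    have h1 : 0 ≤ Real.sinh t := by rw [← Real.sinh_zero]; exact Real.sinh_le_sinh.mpr ht
    have h2 : 0 ≤ Real.sinh s := by rw [← Real.sinh_zero]; exact Real.sinh_le_sinh.mpr hs
    positivity
  calc dist (p₁.center t : ℂ) (p₂.center s : ℂ)
      = √(dist (p₁.center t : ℂ) (p₂.center s : ℂ) ^ 2) := (Real.sqrt_sq dist_nonneg).symm
    _ = √((p₁.im * Real.sinh t + p₂.im * Real.sinh s) ^ 2) := by rw [hdd, key]
    _ = _ := Real.sqrt_sq hR

/-- Two externally tangent circles in `ℂ` meet in exactly the point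
`lineMap m₁ m₂ (r / (r + s))`. -/
lemma aux_tangent_point {m₁ m₂ : ℂ} {r s : ℝ} (hr : 0 ≤ r) (hs : 0 ≤ s)
    (h : dist m₁ m₂ = r + s) (hpos : 0 < r + s) :
    (dist (AffineMap.lineMap m₁ m₂ (r / (r + s)) : ℂ) m₁ = r ∧
     dist (AffineMap.lineMap m₁ m₂ (r / (r + s)) : ℂ) m₂ = s) ∧
    ∀ p : ℂ, dist p m₁ = r → dist p m₂ = s →
      p = AffineMap.lineMap m₁ m₂ (r / (r + s)) := by
  have hd1 : dist (AffineMap.lineMap m₁ m₂ (r / (r + s)) : ℂ) m₁ = r := by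
    rw [dist_lineMap_left, h, Real.norm_eq_abs, abs_of_nonneg (by positivity),
      div_mul_cancel₀ _ hpos.ne']
  have hd2 : dist (AffineMap.lineMap m₁ m₂ (r / (r + s)) : ℂ) m₂ = s := by
    rw [dist_lineMap_right, h, Real.norm_eq_abs]
    rw [show 1 - r / (r + s) = s / (r + s) by field_simp; ring]
    rw [abs_of_nonneg (by positivity), div_mul_cancel₀ _ hpos.ne']
  refine ⟨⟨hd1, hd2⟩, fun p hp1 hp2 => ?_⟩
  have hw : Wbtw ℝ m₁ p m₂ := by
    rw [← dist_add_dist_eq_iff, dist_comm m₁ p, hp1, hp2, h]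
  obtain ⟨u, hu, rfl⟩ := hw
  rw [Set.mem_Icc] at hu
  have := dist_lineMap_left m₁ m₂ u
  rw [hp1, h, Real.norm_eq_abs, abs_of_nonneg hu.1] at this
  have hu' : u = r / (r + s) := by
    field_simp
    linarith
  rw [hu']

/-- For disjoint geodesics `γ₁, γ₂` with common perpendicular meeting `γᵢ` at `pᵢ`,
there is a unique point `p₀` on the segment `p₁p₂` where
`r₁ · sinh dist(p₀,γ₁) = r₂ · sinh dist(p₀,γ₂)`, and strictly between `p₀` and `p₁`
the strict inequality `r₁ · sinh dist(q,γ₁) < r₂ · sinh dist(q,γ₂)` holds. -/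
theorem weighted_sinh_balance_point
    (γ₁ γ₂ : ℝ → UpperHalfPlane) (hγ₁ : IsGeodesic γ₁) (hγ₂ : IsGeodesic γ₂)
    (hdisj : Disjoint (Set.range γ₁) (Set.range γ₂))
    (r₁ r₂ : ℝ) (hr₁ : 0 < r₁) (hr₂ : 0 < r₂)
    (p₁ p₂ : UpperHalfPlane) (hp₁ : p₁ ∈ Set.range γ₁) (hp₂ : p₂ ∈ Set.range γ₂)
    (hreal : ∀ p ∈ Set.range γ₁, ∀ q ∈ Set.range γ₂, dist p₁ p₂ ≤ dist p q)
    (hfoot₁ : ∀ q : UpperHalfPlane, dist q p₁ + dist p₁ p₂ = dist q p₂ →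
      infDist q (Set.range γ₁) = dist q p₁)
    (hfoot₂ : ∀ q : UpperHalfPlane, dist q p₂ + dist p₂ p₁ = dist q p₁ →
      infDist q (Set.range γ₂) = dist q p₂) :
    (∃! p₀ : UpperHalfPlane,
      (dist p₁ p₀ + dist p₀ p₂ = dist p₁ p₂) ∧
      r₁ * Real.sinh (infDist p₀ (Set.range γ₁)) =
        r₂ * Real.sinh (infDist p₀ (Set.range γ₂))) ∧
    ∀ p₀ : UpperHalfPlane,
      (dist p₁ p₀ + dist p₀ p₂ = dist p₁ p₂) →
      r₁ * Real.sinh (infDist p₀ (Set.range γ₁)) =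
        r₂ * Real.sinh (infDist p₀ (Set.range γ₂)) →
      ∀ q : UpperHalfPlane, dist p₀ q + dist q p₁ = dist p₀ p₁ →
        q ≠ p₀ → q ≠ p₁ →
        r₁ * Real.sinh (infDist q (Set.range γ₁)) <
          r₂ * Real.sinh (infDist q (Set.range γ₂)) := by
  haveI h₁ne : Nonempty ↥(Set.range γ₁) := ⟨⟨γ₁ 0, Set.mem_range_self 0⟩⟩
  haveI h₂ne : Nonempty ↥(Set.range γ₂) := ⟨⟨γ₂ 0, Set.mem_range_self 0⟩⟩
  set L := dist p₁ p₂ with hLdef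
  have hp1p2 : p₁ ≠ p₂ := by
    intro h
    exact Set.disjoint_left.mp hdisj hp₁ (h ▸ hp₂)
  have hL0 : 0 < L := dist_pos.mpr hp1p2
  -- distances to the geodesics, for points on the segment [p₁, p₂]
  have key : ∀ q : UpperHalfPlane, dist p₁ q + dist q p₂ = L →
      infDist q (Set.range γ₁) = dist q p₁ ∧ infDist q (Set.range γ₂) = dist q p₂ := by
    intro q hq
    constructor
    · refine le_antisymm (infDist_le_dist_of_mem hp₁) ?_
      rw [Metric.infDist_eq_iInf]
      refine le_ciInf fun ⟨p, hp⟩ => ?_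
      have h1 := hreal p hp p₂ hp₂
      have h2 := dist_triangle p q p₂
      have h3 : dist q p₁ = dist p₁ q := dist_comm q p₁
      have h4 : dist q p = dist p q := dist_comm q p
      simp only []
      linarith
    · refine le_antisymm (infDist_le_dist_of_mem hp₂) ?_
      rw [Metric.infDist_eq_iInf]
      refine le_ciInf fun ⟨p, hp⟩ => ?_
      have h1 := hreal p₁ hp₁ p hp
      have h2 := dist_triangle p₁ q p
      simp only []
      linarith [dist_comm q p]
  -- the balance function
  set g : ℝ → ℝ := fun t => r₁ * Real.sinh t - r₂ * Real.sinh (L - t) with hgdef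
  have hgmono : StrictMono g := by
    intro a b hab
    have h1 : Real.sinh a < Real.sinh b := Real.sinh_lt_sinh.mpr hab
    have h2 : Real.sinh (L - b) < Real.sinh (L - a) := Real.sinh_lt_sinh.mpr (by linarith)
    have h3 := mul_lt_mul_of_pos_left h1 hr₁
    have h4 := mul_lt_mul_of_pos_left h2 hr₂
    simp only [hgdef]
    linarith
  -- existence / uniqueness of the point at a given parameter on the segment
  have exists_unique_pt : ∀ t : ℝ, 0 ≤ t → t ≤ L →
      ∃ x : UpperHalfPlane, dist p₁ x = t ∧ dist x p₂ = L - t ∧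
        ∀ y : UpperHalfPlane, dist p₁ y = t → dist y p₂ = L - t → y = x := by
    intro t ht0 htL
    set r := p₁.im * Real.sinh t with hrdef
    set s := p₂.im * Real.sinh (L - t) with hsdef
    have hsinht : 0 ≤ Real.sinh t := by
      rw [← Real.sinh_zero]; exact Real.sinh_le_sinh.mpr ht0
    have hsinhs : 0 ≤ Real.sinh (L - t) := by
      rw [← Real.sinh_zero]; exact Real.sinh_le_sinh.mpr (by linarith)
    have hr : 0 ≤ r := by positivity
    have hs : 0 ≤ s := by positivity
    have htan : dist (p₁.center t : ℂ) (p₂.center (L - t) : ℂ) = r + s :=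
      aux_tangent p₁ p₂ ht0 (by linarith) (by rw [hLdef]; ring)
    have hpos : 0 < r + s := by
      rcases lt_or_eq_of_le ht0 with h | h
      · have : 0 < Real.sinh t := Real.sinh_pos_iff.mpr h
        have : 0 < r := by positivity
        linarith
      · have hLt : 0 < L - t := by rw [← h]; linarith
        have : 0 < Real.sinh (L - t) := Real.sinh_pos_iff.mpr hLt
        have : 0 < s := by positivity
        linarith
    obtain ⟨⟨hd1, hd2⟩, huniq⟩ := aux_tangent_point hr hs htan hpos
    set z : ℂ := AffineMap.lineMap (p₁.center t : ℂ) (p₂.center (L - t) : ℂ) (r / (r + s))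
      with hzdef
    have hlam0 : 0 ≤ r / (r + s) := by positivity
    have hlam1 : r / (r + s) ≤ 1 := by
      rw [div_le_one hpos]; linarith
    have hzim : 0 < z.im := by
      have him1 : (0:ℝ) < (p₁.center t : ℂ).im := (p₁.center t).im_pos
      have him2 : (0:ℝ) < (p₂.center (L - t) : ℂ).im := (p₂.center (L - t)).im_pos
      have hz' : z = (r / (r + s)) • ((p₂.center (L - t) : ℂ) - (p₁.center t : ℂ))
          + (p₁.center t : ℂ) := by
        rw [hzdef, AffineMap.lineMap_apply]
        rfl
      have him : z.im = (p₁.center t : ℂ).im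
          + (r / (r + s)) * ((p₂.center (L - t) : ℂ).im - (p₁.center t : ℂ).im) := by
        rw [hz', Complex.add_im, Complex.smul_im, Complex.sub_im, smul_eq_mul]
        ring
      have h5 : 0 ≤ (1 - r / (r + s)) * ((p₁.center t : ℂ).im
          - min (p₁.center t : ℂ).im (p₂.center (L - t) : ℂ).im) :=
        mul_nonneg (by linarith) (by simp [min_le_left])
      have h6 : 0 ≤ (r / (r + s)) * ((p₂.center (L - t) : ℂ).im
          - min (p₁.center t : ℂ).im (p₂.center (L - t) : ℂ).im) :=
        mul_nonneg hlam0 (by simp [min_le_right])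
      have h7 : 0 < min (p₁.center t : ℂ).im (p₂.center (L - t) : ℂ).im := lt_min him1 him2
      nlinarith [him, h5, h6, h7]
    refine ⟨⟨z, hzim⟩, ?_, ?_, ?_⟩
    · rw [dist_comm]
      rw [UpperHalfPlane.dist_eq_iff_dist_coe_center_eq]
      exact hd1
    · rw [UpperHalfPlane.dist_eq_iff_dist_coe_center_eq]
      exact hd2
    · intro y hy1 hy2
      have hy1' : dist (y : ℂ) (p₁.center t : ℂ) = r := by
        rw [← UpperHalfPlane.dist_eq_iff_dist_coe_center_eq, dist_comm]; exact hy1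
      have hy2' : dist (y : ℂ) (p₂.center (L - t) : ℂ) = s := by
        rw [← UpperHalfPlane.dist_eq_iff_dist_coe_center_eq]; exact hy2
      exact UpperHalfPlane.ext (huniq (y : ℂ) hy1' hy2')
  -- the balance parameter t₀
  have hcont : ContinuousOn g (Set.Icc 0 L) :=
    (Continuous.sub (continuous_const.mul Real.continuous_sinh)
      (continuous_const.mul (Real.continuous_sinh.comp (continuous_const.sub
        continuous_id)))).continuousOn
  have hsinhL : 0 < Real.sinh L := Real.sinh_pos_iff.mpr hL0
  have hg0 : g 0 < 0 := by simp [hgdef]; positivity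
  have hgL : 0 < g L := by simp [hgdef]; positivity
  obtain ⟨t₀, ht₀mem, hgt₀⟩ := intermediate_value_Icc hL0.le hcont
    (Set.mem_Icc.mpr ⟨hg0.le, hgL.le⟩)
  obtain ⟨ht₀0, ht₀L⟩ := Set.mem_Icc.mp ht₀mem
  obtain ⟨x₀, hx₀1, hx₀2, hx₀uniq⟩ := exists_unique_pt t₀ ht₀0 ht₀L
  constructor
  · refine ⟨x₀, ⟨?_, ?_⟩, ?_⟩
    · rw [hx₀1, hx₀2]; ring
    · obtain ⟨k1, k2⟩ := key x₀ (by rw [hx₀1, hx₀2]; ring)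
      rw [k1, k2, dist_comm x₀ p₁, hx₀1, hx₀2]
      have := hgt₀
      simp only [hgdef] at this
      linarith
    · rintro y ⟨hyseg, hybal⟩
      obtain ⟨k1, k2⟩ := key y hyseg
      have hgt' : g (dist p₁ y) = 0 := by
        simp only [hgdef]
        rw [k1, k2, dist_comm y p₁] at hybal
        have h2 : dist y p₂ = L - dist p₁ y := by linarith
        rw [h2] at hybal
        linarith
      have htt : dist p₁ y = t₀ := hgmono.injective (by rw [hgt', hgt₀])
      exact hx₀uniq y htt (by linarith)
  · intro p₀ hseg hbal q hq hqp₀ hqp₁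
    set t := dist p₁ p₀ with htdef
    obtain ⟨k1, k2⟩ := key p₀ hseg
    have hgt : g t = 0 := by
      simp only [hgdef]
      rw [k1, k2, dist_comm p₀ p₁] at hbal
      have h2 : dist p₀ p₂ = L - t := by rw [htdef]; linarith
      rw [h2] at hbal
      linarith
    -- q lies on the segment [p₁, p₂]
    have hq' : dist p₀ q + dist q p₁ = t := by
      rw [hq, dist_comm p₀ p₁]
    have hqseg : dist p₁ q + dist q p₂ = L := by
      have hle : dist q p₂ ≤ dist q p₀ + dist p₀ p₂ := dist_triangle q p₀ p₂
      have h2 : dist p₀ p₂ = L - t := by rw [htdef]; linarith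
      have hge : L ≤ dist p₁ q + dist q p₂ := dist_triangle p₁ q p₂
      have : dist p₁ q + dist q p₂ ≤ L := by
        rw [dist_comm p₁ q]
        rw [h2] at hle
        rw [dist_comm q p₀] at hle
        linarith
      linarith
    obtain ⟨k1q, k2q⟩ := key q hqseg
    have hu : dist q p₁ < t := by
      have : 0 < dist p₀ q := dist_pos.mpr (fun h => hqp₀ h.symm)
      linarith
    have hglt : g (dist q p₁) < 0 := by
      rw [← hgt]
      exact hgmono hu
    rw [k1q, k2q]
    have h2 : dist q p₂ = L - dist q p₁ := by
      rw [dist_comm p₁ q] at hqseg; linarith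
    rw [h2]
    simp only [hgdef] at hglt
    linarith
end
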